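/- Fix α ∈ (0,1), finite sets X, Θ, fully supported φ, μ, and u. The maximizer of U(P) = E_P[u] − α D_KL(P|_ξ∥φ) − I_P(ξ,θ) over joint probabilities P with P|_θ = μ and P|_ξ ≪ φ is unique. -/

import Mathlib

open Finset Real

variable {X Θ : Type*} [Fintype X] [Fintype Θ]

/-- X-marginal of a joint distribution. -/
noncomputable def margX (P : X → Θ → ℝ) (ξ : X) : ℝ := ∑ θ, P ξ θ

/-- Conditional choice probability `P(ξ|θ) = P(ξ,θ)/μ(θ)`. -/
noncomputable def ccp (P : X → Θ → ℝ) (μ : Θ → ℝ) (ξ : X) (θ : Θ) : ℝ := P ξ θ / μ θ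

/-- The state-characteristic rational inattention objective. -/
noncomputable def Uobj (α : ℝ) (u : X → Θ → ℝ) (φ : X → ℝ) (μ : Θ → ℝ)
    (P : X → Θ → ℝ) : ℝ :=
  (∑ ξ, ∑ θ, P ξ θ * u ξ θ)
    - α * ∑ ξ, margX P ξ * Real.log (margX P ξ / φ ξ)
    - ∑ ξ, ∑ θ, P ξ θ * Real.log (ccp P μ ξ θ / margX P ξ)

/-- The integrand `Y(ξ,θ;P)`. -/
noncomputable def Yfun (α : ℝ) (u : X → Θ → ℝ) (φ : X → ℝ) (μ : Θ → ℝ)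
    (P : X → Θ → ℝ) (ξ : X) (θ : Θ) : ℝ :=
  u ξ θ - α * Real.log (margX P ξ / φ ξ) - Real.log (ccp P μ ξ θ / margX P ξ)

/- ### Auxiliary lemmas -/

lemma negMulLog_mid_ge {x y : ℝ} (hx : 0 ≤ x) (hy : 0 ≤ y) :
    (Real.negMulLog x + Real.negMulLog y) / 2 ≤ Real.negMulLog ((x + y) / 2) := by
  rcases eq_or_ne x y with rfl | hne
  · rw [show (x + x)/2 = x by ring]; linarith
  · have h := Real.strictConcaveOn_negMulLog.2 (Set.mem_Ici.2 hx) (Set.mem_Ici.2 hy) hne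
      (by norm_num : (0:ℝ) < 1/2) (by norm_num : (0:ℝ) < 1/2) (by norm_num)
    simp only [smul_eq_mul] at h
    rw [show 1/2*x + 1/2*y = (x+y)/2 by ring] at h
    linarith

lemma negMulLog_mid_gt {x y : ℝ} (hx : 0 ≤ x) (hy : 0 ≤ y) (hne : x ≠ y) :
    (Real.negMulLog x + Real.negMulLog y) / 2 < Real.negMulLog ((x + y) / 2) := by
  have h := Real.strictConcaveOn_negMulLog.2 (Set.mem_Ici.2 hx) (Set.mem_Ici.2 hy) hne
    (by norm_num : (0:ℝ) < 1/2) (by norm_num : (0:ℝ) < 1/2) (by norm_num)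
  simp only [smul_eq_mul] at h
  rw [show 1/2*x + 1/2*y = (x+y)/2 by ring] at h
  linarith

/-- two-term log-sum inequality -/
lemma logsum {a b c d : ℝ} (ha : 0 ≤ a) (hab : a ≤ b) (hc : 0 ≤ c) (hcd : c ≤ d) :
    a * Real.log (b / a) + c * Real.log (d / c) ≤ (a + c) * Real.log ((b + d) / (a + c)) := by
  rcases eq_or_lt_of_le ha with rfl | ha
  · rcases eq_or_lt_of_le hc with rfl | hc
    · simp
    · simp only [zero_add]
      have hd : 0 < d := lt_of_lt_of_le hc hcd
      have : Real.log (d / c) ≤ Real.log ((b + d) / c) := by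
        apply Real.log_le_log (by positivity)
        gcongr
        linarith
      nlinarith [this]
  · rcases eq_or_lt_of_le hc with rfl | hc
    · simp only [add_zero]
      have hb : 0 < b := lt_of_lt_of_le ha hab
      have : Real.log (b / a) ≤ Real.log ((b + d) / a) := by
        apply Real.log_le_log (by positivity)
        gcongr
        linarith
      nlinarith [this]
    · have hb : 0 < b := lt_of_lt_of_le ha hab
      have hd : 0 < d := lt_of_lt_of_le hc hcd
      set s := (b + d) / (a + c) with hs
      have hspos : 0 < s := by positivity
      have h1 : Real.log (b / a / s) ≤ b / a / s - 1 :=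
        Real.log_le_sub_one_of_pos (by positivity)
      have h2 : Real.log (d / c / s) ≤ d / c / s - 1 :=
        Real.log_le_sub_one_of_pos (by positivity)
      have e1 : Real.log (b / a / s) = Real.log (b / a) - Real.log s :=
        Real.log_div (by positivity) (ne_of_gt hspos)
      have e2 : Real.log (d / c / s) = Real.log (d / c) - Real.log s :=
        Real.log_div (by positivity) (ne_of_gt hspos)
      have key : a * (Real.log (b / a) - Real.log s) + c * (Real.log (d / c) - Real.log s) ≤ 0 := by
        rw [← e1, ← e2]
        have h3 : a * Real.log (b / a / s) ≤ a * (b / a / s - 1) :=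
          mul_le_mul_of_nonneg_left h1 (le_of_lt ha)
        have h4 : c * Real.log (d / c / s) ≤ c * (d / c / s - 1) :=
          mul_le_mul_of_nonneg_left h2 (le_of_lt hc)
        have hcalc : a * (b / a / s - 1) + c * (d / c / s - 1) = 0 := by
          field_simp [hs]
          rw [hs, div_eq_mul_inv]
          have hinv : (a + c) * (a + c)⁻¹ = 1 := mul_inv_cancel₀ (by positivity)
          linear_combination (-(b + d)) * hinv
        linarith
      nlinarith [key]

lemma term_negMulLog {a b : ℝ} (ha : 0 ≤ a) (hab : a ≤ b) :
    a * Real.log (b / a) = Real.negMulLog a + a * Real.log b := by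
  rcases eq_or_lt_of_le ha with rfl | ha
  · simp
  · have hb : 0 < b := lt_of_lt_of_le ha hab
    rw [Real.log_div (ne_of_gt hb) (ne_of_gt ha), Real.negMulLog]
    ring

lemma logsum_strict {a b c : ℝ} (ha : 0 ≤ a) (hab : a ≤ b) (hc : 0 ≤ c) (hcb : c ≤ b)
    (hne : a ≠ c) :
    a * Real.log (b / a) + c * Real.log (b / c) < (a + c) * Real.log ((b + b) / (a + c)) := by
  have hac : 0 < a + c := by
    rcases hne.lt_or_gt with h | h
    · have : 0 < c := lt_of_le_of_lt ha h; linarith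
    · have : 0 < a := lt_of_le_of_lt hc h; linarith
  have hb : 0 < b := by
    rcases hne.lt_or_gt with h | h
    · exact lt_of_lt_of_le (lt_of_le_of_lt ha h) hcb
    · exact lt_of_lt_of_le (lt_of_le_of_lt hc h) hab
  have key : (Real.negMulLog a + Real.negMulLog c) / 2 < Real.negMulLog ((a + c) / 2) :=
    negMulLog_mid_gt ha hc hne
  have e1 : a * Real.log (b / a) = Real.negMulLog a + a * Real.log b := term_negMulLog ha hab
  have e2 : c * Real.log (b / c) = Real.negMulLog c + c * Real.log b := term_negMulLog hc hcb
  have e3 : Real.log ((b + b) / (a + c)) = Real.log 2 + Real.log b - Real.log (a + c) := by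
    rw [show b + b = 2 * b by ring, Real.log_div (by positivity) (ne_of_gt hac),
      Real.log_mul (by norm_num) (ne_of_gt hb)]
  have e4 : Real.negMulLog ((a + c) / 2)
      = -(a + c) / 2 * (Real.log (a + c) - Real.log 2) := by
    rw [Real.negMulLog, Real.log_div (ne_of_gt hac) (by norm_num)]
    ring
  rw [e1, e2, e3]
  rw [e4] at key
  nlinarith [key]

lemma half_div_half (x y : ℝ) : (x / 2) / (y / 2) = x / y := by
  rcases eq_or_ne y 0 with rfl | h
  · simp
  · field_simp

/-- Rewriting of the objective into linear part + conditional entropy + α·marginal entropy. -/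
lemma Uobj_eq (α : ℝ) (u : X → Θ → ℝ)
    (φ : X → ℝ) (hφ0 : ∀ ξ, 0 < φ ξ) (μ : Θ → ℝ) (hμ0 : ∀ θ, 0 < μ θ)
    (P : X → Θ → ℝ) (hP0 : ∀ ξ θ, 0 ≤ P ξ θ) :
    Uobj α u φ μ P
      = (∑ ξ, ∑ θ, P ξ θ * (u ξ θ + α * Real.log (φ ξ) + Real.log (μ θ)))
        + (∑ ξ, ∑ θ, P ξ θ * Real.log (margX P ξ / P ξ θ))
        + α * ∑ ξ, Real.negMulLog (margX P ξ) := by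
  have hm0 : ∀ ξ, 0 ≤ margX P ξ := fun ξ => Finset.sum_nonneg fun θ _ => hP0 ξ θ
  have hble : ∀ ξ θ, P ξ θ ≤ margX P ξ := fun ξ θ =>
    Finset.single_le_sum (fun θ' _ => hP0 ξ θ') (Finset.mem_univ θ)
  have hB : ∀ ξ, margX P ξ * Real.log (margX P ξ / φ ξ)
      = - Real.negMulLog (margX P ξ) - margX P ξ * Real.log (φ ξ) := by
    intro ξ
    rcases eq_or_lt_of_le (hm0 ξ) with h | h
    · rw [← h]; simp
    · rw [Real.log_div (ne_of_gt h) (ne_of_gt (hφ0 ξ)), Real.negMulLog]; ring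
  have hC : ∀ ξ θ, P ξ θ * Real.log (ccp P μ ξ θ / margX P ξ)
      = - (P ξ θ * Real.log (margX P ξ / P ξ θ)) - P ξ θ * Real.log (μ θ) := by
    intro ξ θ
    rcases eq_or_lt_of_le (hP0 ξ θ) with h | h
    · rw [← h]; simp [ccp]
    · have hν : 0 < margX P ξ := lt_of_lt_of_le h (hble ξ θ)
      rw [ccp, Real.log_div (ne_of_gt (div_pos h (hμ0 θ))) (ne_of_gt hν),
        Real.log_div (ne_of_gt h) (ne_of_gt (hμ0 θ)),
        Real.log_div (ne_of_gt hν) (ne_of_gt h)]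
      ring
  have hφsum : ∀ ξ, ∑ θ, P ξ θ * (α * Real.log (φ ξ))
      = α * (margX P ξ * Real.log (φ ξ)) := by
    intro ξ
    rw [← Finset.sum_mul, margX]
    ring
  rw [Uobj]
  simp only [hB, hC, mul_add, Finset.sum_add_distrib, Finset.sum_sub_distrib, mul_sub,
    Finset.mul_sum, Finset.sum_neg_distrib, hφsum]
  simp only [mul_neg, Finset.mul_sum]
  ring

theorem maximizer_unique
    (α : ℝ) (hα : 0 < α) (hα1 : α < 1)
    (u : X → Θ → ℝ)
    (φ : X → ℝ) (hφ0 : ∀ ξ, 0 < φ ξ) (hφ1 : ∑ ξ, φ ξ = 1)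
    (μ : Θ → ℝ) (hμ0 : ∀ θ, 0 < μ θ) (hμ1 : ∑ θ, μ θ = 1)
    (P P' : X → Θ → ℝ)
    (hP0 : ∀ ξ θ, 0 ≤ P ξ θ) (hPθ : ∀ θ, ∑ ξ, P ξ θ = μ θ)
    (hP0' : ∀ ξ θ, 0 ≤ P' ξ θ) (hPθ' : ∀ θ, ∑ ξ, P' ξ θ = μ θ)
    (hmax : ∀ Q : X → Θ → ℝ, (∀ ξ θ, 0 ≤ Q ξ θ) → (∀ θ, ∑ ξ, Q ξ θ = μ θ) →
      Uobj α u φ μ Q ≤ Uobj α u φ μ P)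
    (hmax' : ∀ Q : X → Θ → ℝ, (∀ ξ θ, 0 ≤ Q ξ θ) → (∀ θ, ∑ ξ, Q ξ θ = μ θ) →
      Uobj α u φ μ Q ≤ Uobj α u φ μ P') :
    P = P' := by
  by_contra hne
  -- find a point of disagreement
  have hex : ∃ ξ θ, P ξ θ ≠ P' ξ θ := by
    by_contra h
    push_neg at h
    exact hne (funext fun ξ => funext fun θ => h ξ θ)
  obtain ⟨ξ0, θ0, hdis⟩ := hex
  -- the midpoint
  set Q : X → Θ → ℝ := fun ξ θ => (P ξ θ + P' ξ θ) / 2 with hQdef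
  have hQ0 : ∀ ξ θ, 0 ≤ Q ξ θ := fun ξ θ => by
    have := hP0 ξ θ; have := hP0' ξ θ; simp only [hQdef]; linarith
  have hQθ : ∀ θ, ∑ ξ, Q ξ θ = μ θ := by
    intro θ
    simp only [hQdef]
    rw [← Finset.sum_div, Finset.sum_add_distrib, hPθ θ, hPθ' θ]
    ring
  have hQm : ∀ ξ, margX Q ξ = (margX P ξ + margX P' ξ) / 2 := by
    intro ξ
    simp only [margX, hQdef]
    rw [← Finset.sum_div, Finset.sum_add_distrib]
  -- nonnegativity and bounds
  have hm0 : ∀ ξ, 0 ≤ margX P ξ := fun ξ => Finset.sum_nonneg fun θ _ => hP0 ξ θ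
  have hm0' : ∀ ξ, 0 ≤ margX P' ξ := fun ξ => Finset.sum_nonneg fun θ _ => hP0' ξ θ
  have hble : ∀ ξ θ, P ξ θ ≤ margX P ξ := fun ξ θ =>
    Finset.single_le_sum (fun θ' _ => hP0 ξ θ') (Finset.mem_univ θ)
  have hble' : ∀ ξ θ, P' ξ θ ≤ margX P' ξ := fun ξ θ =>
    Finset.single_le_sum (fun θ' _ => hP0' ξ θ') (Finset.mem_univ θ)
  -- values of both maximizers agree
  have hPP' : Uobj α u φ μ P' = Uobj α u φ μ P :=
    le_antisymm (hmax P' hP0' hPθ') (hmax' P hP0 hPθ)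
  -- rewrite the three objectives
  have hU := Uobj_eq α u φ hφ0 μ hμ0 P hP0
  have hU' := Uobj_eq α u φ hφ0 μ hμ0 P' hP0'
  have hUQ := Uobj_eq α u φ hφ0 μ hμ0 Q hQ0
  -- linear part is exactly the average
  have hL : (∑ ξ, ∑ θ, Q ξ θ * (u ξ θ + α * Real.log (φ ξ) + Real.log (μ θ)))
      = ((∑ ξ, ∑ θ, P ξ θ * (u ξ θ + α * Real.log (φ ξ) + Real.log (μ θ)))
        + (∑ ξ, ∑ θ, P' ξ θ * (u ξ θ + α * Real.log (φ ξ) + Real.log (μ θ)))) / 2 := by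
    rw [← Finset.sum_add_distrib, Finset.sum_div]
    refine Finset.sum_congr rfl fun ξ _ => ?_
    rw [← Finset.sum_add_distrib, Finset.sum_div]
    refine Finset.sum_congr rfl fun θ _ => ?_
    simp only [hQdef]
    ring
  -- conditional entropy terms: pointwise representation of the Q-term
  have hQterm : ∀ ξ θ, Q ξ θ * Real.log (margX Q ξ / Q ξ θ)
      = ((P ξ θ + P' ξ θ) * Real.log
          ((margX P ξ + margX P' ξ) / (P ξ θ + P' ξ θ))) / 2 := by
    intro ξ θ
    rw [hQm ξ]
    simp only [hQdef]
    rw [half_div_half]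
    ring
  -- conditional entropy: midpoint dominates the average (pointwise, via log-sum)
  have hCpt : ∀ ξ θ, (P ξ θ * Real.log (margX P ξ / P ξ θ)
        + P' ξ θ * Real.log (margX P' ξ / P' ξ θ)) / 2
      ≤ Q ξ θ * Real.log (margX Q ξ / Q ξ θ) := by
    intro ξ θ
    rw [hQterm ξ θ]
    have := logsum (hP0 ξ θ) (hble ξ θ) (hP0' ξ θ) (hble' ξ θ)
    linarith
  have hC : ((∑ ξ, ∑ θ, P ξ θ * Real.log (margX P ξ / P ξ θ))
        + (∑ ξ, ∑ θ, P' ξ θ * Real.log (margX P' ξ / P' ξ θ))) / 2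
      ≤ ∑ ξ, ∑ θ, Q ξ θ * Real.log (margX Q ξ / Q ξ θ) := by
    rw [← Finset.sum_add_distrib, Finset.sum_div]
    refine Finset.sum_le_sum fun ξ _ => ?_
    rw [← Finset.sum_add_distrib, Finset.sum_div]
    exact Finset.sum_le_sum fun θ _ => hCpt ξ θ
  -- marginal entropy: midpoint dominates the average
  have hHpt : ∀ ξ, (Real.negMulLog (margX P ξ) + Real.negMulLog (margX P' ξ)) / 2
      ≤ Real.negMulLog (margX Q ξ) := by
    intro ξ
    rw [hQm ξ]
    exact negMulLog_mid_ge (hm0 ξ) (hm0' ξ)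
  have hH : ((∑ ξ, Real.negMulLog (margX P ξ)) + ∑ ξ, Real.negMulLog (margX P' ξ)) / 2
      ≤ ∑ ξ, Real.negMulLog (margX Q ξ) := by
    rw [← Finset.sum_add_distrib, Finset.sum_div]
    exact Finset.sum_le_sum fun ξ _ => hHpt ξ
  -- Now show strict improvement somewhere, by cases on whether the marginals agree
  have hstrict : Uobj α u φ μ P < Uobj α u φ μ Q := by
    by_cases hmarg : ∀ ξ, margX P ξ = margX P' ξ
    · -- strict inequality in the conditional-entropy part at (ξ0, θ0)
      have hb : margX P ξ0 = margX P' ξ0 := hmarg ξ0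
      have hCstrict : ((∑ ξ, ∑ θ, P ξ θ * Real.log (margX P ξ / P ξ θ))
            + (∑ ξ, ∑ θ, P' ξ θ * Real.log (margX P' ξ / P' ξ θ))) / 2
          < ∑ ξ, ∑ θ, Q ξ θ * Real.log (margX Q ξ / Q ξ θ) := by
        rw [← Finset.sum_add_distrib, Finset.sum_div]
        refine Finset.sum_lt_sum (fun ξ _ => ?_) ⟨ξ0, Finset.mem_univ ξ0, ?_⟩
        · rw [← Finset.sum_add_distrib, Finset.sum_div]
          exact Finset.sum_le_sum fun θ _ => hCpt ξ θ
        · rw [← Finset.sum_add_distrib, Finset.sum_div]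
          refine Finset.sum_lt_sum (fun θ _ => hCpt ξ0 θ) ⟨θ0, Finset.mem_univ θ0, ?_⟩
          rw [hQterm ξ0 θ0]
          have hs := logsum_strict (hP0 ξ0 θ0) (hble ξ0 θ0) (hP0' ξ0 θ0)
            (hb ▸ hble' ξ0 θ0) hdis
          rw [← hb]
          linarith
      have hHα : α * (((∑ ξ, Real.negMulLog (margX P ξ))
            + ∑ ξ, Real.negMulLog (margX P' ξ)) / 2)
          ≤ α * ∑ ξ, Real.negMulLog (margX Q ξ) :=
        mul_le_mul_of_nonneg_left hH (le_of_lt hα)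
      rw [hU, hU'] at hPP'
      rw [hU, hUQ, hL]
      linarith [hPP', hCstrict, hHα]
    · -- strict inequality in the marginal-entropy part
      push_neg at hmarg
      obtain ⟨ξ1, hξ1⟩ := hmarg
      have hHstrict : ((∑ ξ, Real.negMulLog (margX P ξ))
            + ∑ ξ, Real.negMulLog (margX P' ξ)) / 2
          < ∑ ξ, Real.negMulLog (margX Q ξ) := by
        rw [← Finset.sum_add_distrib, Finset.sum_div]
        refine Finset.sum_lt_sum (fun ξ _ => hHpt ξ) ⟨ξ1, Finset.mem_univ ξ1, ?_⟩
        rw [hQm ξ1]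
        exact negMulLog_mid_gt (hm0 ξ1) (hm0' ξ1) hξ1
      have hHα : α * (((∑ ξ, Real.negMulLog (margX P ξ))
            + ∑ ξ, Real.negMulLog (margX P' ξ)) / 2)
          < α * ∑ ξ, Real.negMulLog (margX Q ξ) :=
        mul_lt_mul_of_pos_left hHstrict hα
      rw [hU, hU'] at hPP'
      rw [hU, hUQ, hL]
      linarith [hPP', hC, hHα]
  exact absurd (hmax Q hQ0 hQθ) (not_le.mpr hstrict)
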